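/- Memoryless-channel chain rule: let 𝒳, 𝒴 be finite types, Q a stochastic matrix (channel) from 𝒳 to 𝒴, n a positive integer, and let X^n = (X_1,…,X_n), C, Y^n = (Y_1,…,Y_n) be jointly distributed finite-valued random variables such that P(Y^n = y^n | X^n = x^n, C = c) = ∏_{i=1}^n Q(y_i | x_i) whenever P(X^n = x^n, C = c) > 0. Then I(X^n; Y^n | C) = ∑_{i=1}^n I(X_i; Y_i | (Y^{i−1}, C)), where Y^{i−1} = (Y_1,…,Y_{i−1}). -/

import Mathlib

open scoped BigOperators

/-- The probability that a random variable `X` on the finite probability space `(Ω, μ)`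
takes the value `a`. -/
noncomputable def prob {Ω α : Type} [Fintype Ω] [DecidableEq α]
    (μ : Ω → ℝ) (X : Ω → α) (a : α) : ℝ :=
  ∑ ω, if X ω = a then μ ω else 0

/-- Shannon entropy (natural logarithm) of `X`. -/
noncomputable def entH {Ω α : Type} [Fintype Ω] [Fintype α] [DecidableEq α]
    (μ : Ω → ℝ) (X : Ω → α) : ℝ :=
  -∑ a, prob μ X a * Real.log (prob μ X a)

/-- Conditional entropy `H(X|Y) = H(X,Y) - H(Y)`. -/
noncomputable def condH {Ω α β : Type} [Fintype Ω] [Fintype α] [DecidableEq α]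
    [Fintype β] [DecidableEq β] (μ : Ω → ℝ) (X : Ω → α) (Y : Ω → β) : ℝ :=
  entH μ (fun ω => (X ω, Y ω)) - entH μ Y

/-- Mutual information `I(X;Y) = H(X) + H(Y) - H(X,Y)`. -/
noncomputable def MI {Ω α β : Type} [Fintype Ω] [Fintype α] [DecidableEq α]
    [Fintype β] [DecidableEq β] (μ : Ω → ℝ) (X : Ω → α) (Y : Ω → β) : ℝ :=
  entH μ X + entH μ Y - entH μ (fun ω => (X ω, Y ω))

/-- Conditional mutual information
`I(X;Y|Z) = H(X,Z) + H(Y,Z) - H(X,Y,Z) - H(Z)`. -/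
noncomputable def condMI {Ω α β γ : Type} [Fintype Ω] [Fintype α] [DecidableEq α]
    [Fintype β] [DecidableEq β] [Fintype γ] [DecidableEq γ]
    (μ : Ω → ℝ) (X : Ω → α) (Y : Ω → β) (Z : Ω → γ) : ℝ :=
  entH μ (fun ω => (X ω, Z ω)) + entH μ (fun ω => (Y ω, Z ω))
    - entH μ (fun ω => (X ω, Y ω, Z ω)) - entH μ Z

/-- `A` is conditionally independent of `B` given `C`:
`P(A=a, B=b | C=c) = P(A=a|C=c)·P(B=b|C=c)` whenever `P(C=c) > 0`
(stated multiplicatively). -/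
def CondIndep {Ω α β γ : Type} [Fintype Ω] [DecidableEq α] [DecidableEq β] [DecidableEq γ]
    (μ : Ω → ℝ) (A : Ω → α) (B : Ω → β) (C : Ω → γ) : Prop :=
  ∀ a b c, 0 < prob μ C c →
    prob μ (fun ω => (A ω, B ω, C ω)) (a, b, c) * prob μ C c =
      prob μ (fun ω => (A ω, C ω)) (a, c) * prob μ (fun ω => (B ω, C ω)) (b, c)

/-!
Both sides are differences of conditional entropies. On the left,
`I(Xⁿ;Yⁿ|C) = H(Yⁿ|C) - H(Yⁿ|Xⁿ,C)`, and the chain rule splits the two terms into the sums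
over `i` of `H(Yᵢ|Yⁱ⁻¹,C)` and of `H(Yᵢ|Yⁱ⁻¹,Xⁿ,C)`. Because the channel is memoryless, the
conditional law of `Yᵢ` given all other outputs, all inputs and `C` is `Q(·|Xᵢ)`; this survives
coarsening the conditioning to `(Yⁱ⁻¹,Xⁿ,C)` or to `(Xᵢ,Yⁱ⁻¹,C)` as long as `Xᵢ` is kept, so
`H(Yᵢ|Yⁱ⁻¹,Xⁿ,C) = E[H(Q(·|Xᵢ))] = H(Yᵢ|Xᵢ,Yⁱ⁻¹,C)`, and the `i`-th difference is
`I(Xᵢ;Yᵢ|Yⁱ⁻¹,C)`.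
-/

open Real Finset Function

section Prob
variable {Ω α β : Type} [Fintype Ω] [DecidableEq α] (μ : Ω → ℝ)

lemma prob_nonneg (hμ : ∀ ω, 0 ≤ μ ω) (X : Ω → α) (a : α) : 0 ≤ prob μ X a :=
  sum_nonneg fun ω _ => by split_ifs <;> simp [hμ ω]

lemma prob_congr [DecidableEq β] {X : Ω → α} {X' : Ω → β} {a : α} {b : β}
    (h : ∀ ω, X ω = a ↔ X' ω = b) : prob μ X a = prob μ X' b :=
  sum_congr rfl fun ω _ => if_congr (h ω) rfl rfl

lemma sum_prob_mul [Fintype α] (X : Ω → α) (φ : α → ℝ) :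
    ∑ a, prob μ X a * φ a = ∑ ω, μ ω * φ (X ω) := by
  simp only [prob, sum_mul, ite_mul, zero_mul]
  rw [sum_comm]
  simp

lemma sum_prob_pair [DecidableEq β] [Fintype α] (X : Ω → α) (W : Ω → β) (w : β) :
    ∑ a, prob μ (fun ω => (X ω, W ω)) (a, w) = prob μ W w := by
  simp only [prob, Prod.mk.injEq, ite_and]
  rw [sum_comm]
  simp

lemma prob_comp_eq_sum [Fintype α] [DecidableEq β] (X : Ω → α) (g : α → β) (b : β) :
    prob μ (fun ω => g (X ω)) b = ∑ a, if g a = b then prob μ X a else 0 := by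
  calc prob μ (fun ω => g (X ω)) b = ∑ ω, μ ω * if g (X ω) = b then 1 else 0 := by
        simp [prob]
    _ = _ := by rw [← sum_prob_mul μ X fun a => if g a = b then 1 else 0]; simp

lemma entH_eq_sum_negMulLog [Fintype α] (X : Ω → α) :
    entH μ X = ∑ a, negMulLog (prob μ X a) := by
  simp [entH, negMulLog, sum_neg_distrib]

lemma entH_comp_of_injective [Fintype α] [Fintype β] [DecidableEq β] (X : Ω → α)
    {e : α → β} (he : Injective e) : entH μ (fun ω => e (X ω)) = entH μ X := by
  simp only [entH_eq_sum_negMulLog]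
  refine (Fintype.sum_of_injective e he _ _ (fun b hb => ?_) fun a => ?_).symm
  · rw [show prob μ (fun ω => e (X ω)) b = 0 from
      sum_eq_zero fun ω _ => if_neg fun h => hb ⟨X ω, h⟩, negMulLog_zero]
  · rw [prob_congr μ fun ω => he.eq_iff.symm]

lemma condH_comp_of_injective [Fintype α] [Fintype β] [DecidableEq β] {γ : Type} [Fintype γ]
    [DecidableEq γ] (X : Ω → α) (W : Ω → γ) {e : α → β} (he : Injective e) :
    condH μ (fun ω => e (X ω)) W = condH μ X W := by
  simp only [condH]
  rw [← entH_comp_of_injective μ (fun ω => (X ω, W ω)) (he.prodMap injective_id)]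
  rfl

end Prob

section Channel
variable {Ω β η : Type} [Fintype Ω] [DecidableEq β] [DecidableEq η] (μ : Ω → ℝ)

/-- The conditional law of `Y` given `W = w` is `K w`, stated multiplicatively so that nothing is
asserted when `P(W = w) = 0`. -/
def IsChannelOutput (K : β → η → ℝ) (W : Ω → β) (Y : Ω → η) : Prop :=
  ∀ y w, prob μ (fun ω => (Y ω, W ω)) (y, w) = K w y * prob μ W w

variable {μ}

lemma isChannelOutput_of_pos [Fintype η] (hμ : ∀ ω, 0 ≤ μ ω) {K : β → η → ℝ} {W : Ω → β}
    {Y : Ω → η}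
    (h : ∀ y w, 0 < prob μ W w → prob μ (fun ω => (Y ω, W ω)) (y, w) = K w y * prob μ W w) :
    IsChannelOutput μ K W Y := by
  intro y w
  rcases (prob_nonneg μ hμ W w).lt_or_eq with hw | hw
  · exact h y w hw
  · rw [← hw, mul_zero]
    refine le_antisymm ?_ (prob_nonneg μ hμ _ _)
    calc prob μ (fun ω => (Y ω, W ω)) (y, w)
        ≤ ∑ y', prob μ (fun ω => (Y ω, W ω)) (y', w) :=
          single_le_sum (fun y' _ => prob_nonneg μ hμ _ (y', w)) (mem_univ y)
      _ = 0 := by rw [sum_prob_pair, hw]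

lemma condH_eq_of_isChannelOutput [Fintype β] [Fintype η] {K : β → η → ℝ} {W : Ω → β}
    {Y : Ω → η} (h : IsChannelOutput μ K W Y) (hK : ∀ w, ∑ y, K w y = 1) :
    condH μ Y W = ∑ ω, μ ω * ∑ y, negMulLog (K (W ω) y) := by
  calc condH μ Y W = ∑ w, ∑ y, negMulLog (K w y * prob μ W w) - entH μ W := by
        rw [condH, entH_eq_sum_negMulLog, Fintype.sum_prod_type, sum_comm]
        exact congrArg (· - _) (sum_congr rfl fun w _ => sum_congr rfl fun y _ => by rw [h])
    _ = ∑ w, prob μ W w * ∑ y, negMulLog (K w y) := by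
        simp only [negMulLog_mul, sum_add_distrib, ← sum_mul, hK, one_mul, mul_sum]
        rw [entH_eq_sum_negMulLog, add_sub_cancel_right]
    _ = _ := sum_prob_mul μ W _

lemma IsChannelOutput.comp {γ : Type} [Fintype β] [Fintype η] [DecidableEq γ] {K : γ → η → ℝ}
    {g : β → γ} {W : Ω → β} {Y : Ω → η} (h : IsChannelOutput μ (fun w => K (g w)) W Y) :
    IsChannelOutput μ K (fun ω => g (W ω)) Y := by
  intro y t
  refine (prob_comp_eq_sum μ (fun ω => (Y ω, W ω)) (Prod.map id g) (y, t)).trans ?_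
  rw [prob_comp_eq_sum μ W g, mul_sum, Fintype.sum_prod_type_right]
  refine sum_congr rfl fun z _ => ?_
  simp only [Prod.map, id, Prod.mk.injEq, and_comm (a := _ = y), ite_and]
  split_ifs with hz
  · simp [h y z, hz]
  · simp

lemma IsChannelOutput.coord {ι : Type} [Fintype ι] [DecidableEq ι] [Fintype η]
    {K : ι → β → η → ℝ} {W : Ω → β} {Y : ι → Ω → η}
    (h : IsChannelOutput μ (fun w ys => ∏ j, K j w (ys j)) W (fun ω j => Y j ω)) (i : ι)
    (hK : ∀ w, ∑ y, K i w y = 1) :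
    IsChannelOutput μ (fun v => K i v.2)
      (fun ω => ((fun j : {j // j ≠ i} => Y j ω), W ω)) (Y i) := by
  rintro y ⟨u, w⟩
  have hsplit : ∀ y, prob μ (fun ω => (Y i ω, (fun j : {j // j ≠ i} => Y j ω), W ω)) (y, u, w)
      = K i w y * ((∏ j : {j // j ≠ i}, K j w (u j)) * prob μ W w) := by
    intro y
    rw [prob_congr μ (X' := fun ω => ((fun j => Y j ω), W ω))
      (b := ((Equiv.funSplitAt i η).symm (y, u), w)) fun ω => ?_, h]
    · simp only
      have hys : ∀ j : {j // j ≠ i}, (Equiv.funSplitAt i η).symm (y, u) j = u j := fun j => by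
        simp [j.2]
      rw [Fintype.prod_eq_mul_prod_subtype_ne _ i]
      simp [hys, mul_assoc]
    · simp [Equiv.eq_symm_apply, and_assoc]
  have hmarg : prob μ (fun ω => ((fun j : {j // j ≠ i} => Y j ω), W ω)) (u, w)
      = (∏ j : {j // j ≠ i}, K j w (u j)) * prob μ W w := by
    rw [← sum_prob_pair μ (Y i), sum_congr rfl fun y _ => hsplit y, ← sum_mul, hK, one_mul]
  rw [hsplit, hmarg]

end Channel

section Entropy
variable {Ω α β γ : Type} [Fintype Ω] [Fintype α] [DecidableEq α] [Fintype β] [DecidableEq β]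
  [Fintype γ] [DecidableEq γ] (μ : Ω → ℝ)

lemma condH_pair (X : Ω → α) (Y : Ω → β) (W : Ω → γ) :
    condH μ (fun ω => (X ω, Y ω)) W = condH μ Y W + condH μ X (fun ω => (Y ω, W ω)) := by
  have hassoc : entH μ (fun ω => ((X ω, Y ω), W ω)) = entH μ (fun ω => (X ω, Y ω, W ω)) :=
    (entH_comp_of_injective μ (fun ω => ((X ω, Y ω), W ω)) (Equiv.prodAssoc α β γ).injective).symm
  simp only [condH, hassoc]
  ring

lemma condMI_eq_condH_sub_condH (X : Ω → α) (Y : Ω → β) (W : Ω → γ) :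
    condMI μ X Y W = condH μ Y W - condH μ Y (fun ω => (X ω, W ω)) := by
  have hswap : entH μ (fun ω => (X ω, Y ω, W ω)) = entH μ (fun ω => (Y ω, X ω, W ω)) :=
    entH_comp_of_injective μ (fun ω => (Y ω, X ω, W ω))
      ((Equiv.prodAssoc β α γ).symm.trans
        (((Equiv.prodComm β α).prodCongr (Equiv.refl γ)).trans (Equiv.prodAssoc α β γ))).injective
  simp only [condMI, condH, hswap]
  ring

lemma condH_pi_eq_sum (W : Ω → γ) :
    ∀ {n : ℕ} (Y : Fin n → Ω → β), condH μ (fun ω i => Y i ω) W =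
      ∑ i : Fin n, condH μ (Y i)
        (fun ω => ((fun j : Fin i.val => Y ⟨j.val, j.isLt.trans i.isLt⟩ ω), W ω))
  | 0, Y => by
    have hW := entH_comp_of_injective μ W
      (e := fun w => ((fun i : Fin 0 => i.elim0 : Fin 0 → β), w)) fun _ _ h => congrArg Prod.snd h
    simp only [condH, Finset.univ_eq_empty, sum_empty, sub_eq_zero]
    convert hW using 3 with ω
    exact Prod.ext (funext fun i => i.elim0) rfl
  | n + 1, Y => by
    have hsnoc : Injective fun p : β × (Fin n → β) => (Fin.snoc p.2 p.1 : Fin (n + 1) → β) :=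
      (Fin.snocEquiv fun _ => β).injective
    have hY : (fun ω (i : Fin (n + 1)) => Y i ω)
        = fun ω => Fin.snoc (fun i : Fin n => Y i.castSucc ω) (Y (Fin.last n) ω) :=
      funext fun ω => (Fin.snoc_init_self _).symm
    rw [hY, condH_comp_of_injective μ (fun ω => (Y (Fin.last n) ω, fun i : Fin n => Y i.castSucc ω))
      W hsnoc, condH_pair, condH_pi_eq_sum W fun i => Y i.castSucc, Fin.sum_univ_castSucc]
    rfl

end Entropy

lemma IsChannelOutput.condH_coord_eq_of_memoryless {Ω 𝒳 𝒴 γ : Type} [Fintype Ω] [Fintype 𝒳]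
    [DecidableEq 𝒳] [Fintype 𝒴] [DecidableEq 𝒴] [Fintype γ] [DecidableEq γ] {μ : Ω → ℝ} {n : ℕ}
    {Q : 𝒳 → 𝒴 → ℝ} (hQ : ∀ x, ∑ y, Q x y = 1) {X : Fin n → Ω → 𝒳} {Y : Fin n → Ω → 𝒴}
    {C : Ω → γ}
    (h : IsChannelOutput μ (fun w ys => ∏ i, Q (w.1 i) (ys i))
      (fun ω => ((fun i => X i ω), C ω)) (fun ω i => Y i ω)) (i : Fin n) :
    condH μ (Y i)
        (fun ω => ((fun j : Fin i.val => Y ⟨j.val, j.isLt.trans i.isLt⟩ ω), (fun i => X i ω), C ω))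
      = condH μ (Y i)
        (fun ω => (X i ω, (fun j : Fin i.val => Y ⟨j.val, j.isLt.trans i.isLt⟩ ω), C ω)) := by
  have hi := h.coord (K := fun j (w : (Fin n → 𝒳) × γ) => Q (w.1 j)) i fun _ => hQ _
  let init (u : {j // j ≠ i} → 𝒴) (j : Fin i.val) : 𝒴 :=
    u ⟨⟨j.val, j.isLt.trans i.isLt⟩, Fin.ne_of_lt j.isLt⟩
  have hleft : IsChannelOutput μ (fun v => Q (v.2.1 i))
      (fun ω => ((fun j : Fin i.val => Y ⟨j.val, j.isLt.trans i.isLt⟩ ω),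
        (fun i => X i ω), C ω)) (Y i) :=
    hi.comp (K := fun v : (Fin i.val → 𝒴) × (Fin n → 𝒳) × γ => Q (v.2.1 i))
      (g := fun v : ({j // j ≠ i} → 𝒴) × (Fin n → 𝒳) × γ => (init v.1, v.2))
  have hright : IsChannelOutput μ (fun v => Q v.1)
      (fun ω => (X i ω, (fun j : Fin i.val => Y ⟨j.val, j.isLt.trans i.isLt⟩ ω), C ω)) (Y i) :=
    hi.comp (K := fun v : 𝒳 × (Fin i.val → 𝒴) × γ => Q v.1)
      (g := fun v : ({j // j ≠ i} → 𝒴) × (Fin n → 𝒳) × γ => (v.2.1 i, init v.1, v.2.2))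
  rw [condH_eq_of_isChannelOutput hleft fun _ => hQ _,
    condH_eq_of_isChannelOutput hright fun _ => hQ _]

theorem stmt5_general {Ω 𝒳 𝒴 γ : Type} [Fintype Ω]
    [Fintype 𝒳] [DecidableEq 𝒳]
    [Fintype 𝒴] [DecidableEq 𝒴]
    [Fintype γ] [DecidableEq γ]
    (μ : Ω → ℝ) (hμ0 : ∀ ω, 0 ≤ μ ω)
    (n : ℕ)
    (Q : 𝒳 → 𝒴 → ℝ) (hQ1 : ∀ x, ∑ y, Q x y = 1)
    (X : Fin n → Ω → 𝒳) (Y : Fin n → Ω → 𝒴) (C : Ω → γ)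
    (hch : ∀ (xs : Fin n → 𝒳) (c : γ) (ys : Fin n → 𝒴),
      0 < prob μ (fun ω => ((fun i => X i ω), C ω)) (xs, c) →
      prob μ (fun ω => ((fun i => Y i ω), (fun i => X i ω), C ω)) (ys, xs, c) =
        (∏ i, Q (xs i) (ys i)) * prob μ (fun ω => ((fun i => X i ω), C ω)) (xs, c)) :
    condMI μ (fun ω => fun i => X i ω) (fun ω => fun i => Y i ω) C =
      ∑ i : Fin n, condMI μ (X i) (Y i)
        (fun ω => ((fun j : Fin i.val => Y ⟨j.val, j.isLt.trans i.isLt⟩ ω), C ω)) := by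
  have hchannel : IsChannelOutput μ (fun w ys => ∏ i, Q (w.1 i) (ys i))
      (fun ω => ((fun i => X i ω), C ω)) (fun ω i => Y i ω) :=
    isChannelOutput_of_pos hμ0 fun ys w => hch w.1 w.2 ys
  calc condMI μ (fun ω i => X i ω) (fun ω i => Y i ω) C
      = condH μ (fun ω i => Y i ω) C
          - condH μ (fun ω i => Y i ω) (fun ω => ((fun i => X i ω), C ω)) :=
        condMI_eq_condH_sub_condH μ _ _ _
    _ = _ := by
      rw [condH_pi_eq_sum, condH_pi_eq_sum, ← sum_sub_distrib]
      exact sum_congr rfl fun i _ => by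
        rw [hchannel.condH_coord_eq_of_memoryless hQ1, condMI_eq_condH_sub_condH]

/-- Memoryless-channel chain rule: if `Y^n` is produced from `X^n` by the memoryless
channel `Q`, conditionally independently of `C`, then
`I(X^n;Y^n|C) = ∑ i, I(X_i;Y_i | (Y^{i−1}, C))`. -/
theorem stmt5 {Ω 𝒳 𝒴 γ : Type} [Fintype Ω]
    [Fintype 𝒳] [DecidableEq 𝒳] [Nonempty 𝒳]
    [Fintype 𝒴] [DecidableEq 𝒴] [Nonempty 𝒴]
    [Fintype γ] [DecidableEq γ] [Nonempty γ]
    (μ : Ω → ℝ) (hμ0 : ∀ ω, 0 ≤ μ ω) (hμ1 : ∑ ω, μ ω = 1)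
    (n : ℕ) (hn : 0 < n)
    (Q : 𝒳 → 𝒴 → ℝ) (hQ0 : ∀ x y, 0 ≤ Q x y) (hQ1 : ∀ x, ∑ y, Q x y = 1)
    (X : Fin n → Ω → 𝒳) (Y : Fin n → Ω → 𝒴) (C : Ω → γ)
    (hch : ∀ (xs : Fin n → 𝒳) (c : γ) (ys : Fin n → 𝒴),
      0 < prob μ (fun ω => ((fun i => X i ω), C ω)) (xs, c) →
      prob μ (fun ω => ((fun i => Y i ω), (fun i => X i ω), C ω)) (ys, xs, c) =
        (∏ i, Q (xs i) (ys i)) * prob μ (fun ω => ((fun i => X i ω), C ω)) (xs, c)) :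
    condMI μ (fun ω => fun i => X i ω) (fun ω => fun i => Y i ω) C =
      ∑ i : Fin n, condMI μ (X i) (Y i)
        (fun ω => ((fun j : Fin i.val => Y ⟨j.val, j.isLt.trans i.isLt⟩ ω), C ω)) :=
  stmt5_general μ hμ0 n Q hQ1 X Y C hch
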